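/- arXiv:2412.06057 — 3 statements merged into one kernel-verified Lean document; each statement's English description precedes it below -/
import Mathlib

section
/- The pair x(t) = 1/√(2c₁c₂ + c₁t²), y(t) = −c₁t/(2c₁c₂ + c₁t²)^{3/2} solves the first-order Buchdahl system x' = y, y' = (3/x)·y² + (1/t)·y for all t > 0 where 2c₁c₂ + c₁t² > 0. -/
/-! Put `u t = 2c₁c₂ + c₁t²` and `X = u^{-1/2} = x`. Every power of `u` that occurs is an odd power of
`X` (`u^{-3/2} = X³`, `u^{-5/2} = X⁵`), so `x' = -c₁tX³ = y` and `y' = -c₁X³ + 3c₁²t²X⁵`, which is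
`(3/X)(c₁tX³)² - c₁X³`, the right-hand side of the system. -/

open Real

lemma rpow_neg_natCast_div_two_eq_pow {a : ℝ} (ha : 0 ≤ a) (n : ℕ) :
    a ^ (-(n : ℝ) / 2) = (a ^ (-(1 : ℝ) / 2)) ^ n := by
  rw [← rpow_mul_natCast ha]
  congr 1
  ring

lemma HasDerivAt.rpow_neg_natCast_div_two {u : ℝ → ℝ} {u' t : ℝ} (hu : HasDerivAt u u' t)
    (hpos : 0 < u t) (n : ℕ) :
    HasDerivAt (fun s => u s ^ (-(n : ℝ) / 2))
      (-(n * u' / 2) * (u t ^ (-(1 : ℝ) / 2)) ^ (n + 2)) t := by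
  convert hu.rpow_const (p := -(n : ℝ) / 2) (Or.inl hpos.ne') using 1
  have hexp : -(n : ℝ) / 2 - 1 = -((n + 2 : ℕ) : ℝ) / 2 := by push_cast; ring
  rw [hexp, rpow_neg_natCast_div_two_eq_pow hpos.le]
  ring

lemma hasDerivAt_const_add_mul_sq (a b t : ℝ) :
    HasDerivAt (fun s => a + b * s ^ 2) (2 * b * t) t :=
  (((hasDerivAt_pow 2 t).const_mul b).const_add a).congr_deriv (by push_cast; ring)

theorem buchdahl_system_solution_general (c₁ c₂ : ℝ)
    (x y : ℝ → ℝ)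
    (hx : ∀ t, x t = (2 * c₁ * c₂ + c₁ * t ^ 2) ^ (-(1 : ℝ) / 2))
    (hy : ∀ t, y t = -c₁ * t * (2 * c₁ * c₂ + c₁ * t ^ 2) ^ (-(3 : ℝ) / 2)) :
    ∀ t : ℝ, 0 < t → 0 < 2 * c₁ * c₂ + c₁ * t ^ 2 →
      HasDerivAt x (y t) t ∧
      HasDerivAt y ((3 / x t) * (y t) ^ 2 + (1 / t) * y t) t := by
  intro t ht hu
  have hu' := hasDerivAt_const_add_mul_sq (2 * c₁ * c₂) c₁ t
  set X := (2 * c₁ * c₂ + c₁ * t ^ 2) ^ (-(1 : ℝ) / 2) with hX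
  have hXpos : 0 < X := rpow_pos_of_pos hu _
  have hX3 : (2 * c₁ * c₂ + c₁ * t ^ 2) ^ (-(3 : ℝ) / 2) = X ^ 3 := by
    rw [hX]
    exact_mod_cast rpow_neg_natCast_div_two_eq_pow hu.le 3
  have hdx := hu'.rpow_neg_natCast_div_two hu 1
  have hdy := ((hasDerivAt_id' t).const_mul (-c₁)).mul (hu'.rpow_neg_natCast_div_two hu 3)
  simp only [Nat.cast_one, Nat.cast_ofNat, ← hX, hX3] at hdx hdy
  rw [hx t, hy t, hX3, ← hX, funext hx, funext hy]
  refine ⟨hdx.congr_deriv (by ring), hdy.congr_deriv ?_⟩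
  field_simp
  ring

theorem buchdahl_system_solution (c₁ c₂ : ℝ) (hc₁ : c₁ ≠ 0)
    (x y : ℝ → ℝ)
    (hx : ∀ t, x t = (2 * c₁ * c₂ + c₁ * t ^ 2) ^ (-(1 : ℝ) / 2))
    (hy : ∀ t, y t = -c₁ * t * (2 * c₁ * c₂ + c₁ * t ^ 2) ^ (-(3 : ℝ) / 2)) :
    ∀ t : ℝ, 0 < t → 0 < 2 * c₁ * c₂ + c₁ * t ^ 2 →
      HasDerivAt x (y t) t ∧
      HasDerivAt y ((3 / x t) * (y t) ^ 2 + (1 / t) * y t) t :=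
  buchdahl_system_solution_general c₁ c₂ x y hx hy
end

section
/- The functions q(t) = −(1/z)·ln(1 − z c₁ e^{γ(t)}) and p(t) = (e^{−γ(t)} − z c₁)·(c₂ + ∫_{t₀}^t (e^{−γ(τ)} − z c₁)^{−1} dτ) solve the deformed book system q' = b(t)·(e^{zq}−1)/z, p' = 1 − b(t)·e^{zq}·p, on any interval where 1 − z c₁ e^{γ(t)} > 0, with γ' = b. -/
/-!
With `u = 1 - z c₁ e^γ` we have `e^{z q} = u⁻¹`, so the `q`-equation is just the chain rule for
`-log u / z`. The prefactor `w = e^{-γ} - z c₁ = e^{-γ} u` of `p` satisfies `w' = -b e^{-γ} = -b e^{zq} w`,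
and `p = w (c₂ + ∫ w⁻¹)` is the variation-of-constants solution of `p' = 1 + (w'/w) p`.
-/

open Real Set

lemma exp_neg_sub_eq_exp_neg_mul (x a : ℝ) : exp (-x) - a = exp (-x) * (1 - a * exp x) := by
  rw [mul_sub, ← mul_assoc, mul_comm (exp (-x)) a, mul_assoc, ← exp_add, neg_add_cancel, exp_zero,
    mul_one, mul_one]

lemma exp_mul_neg_log_div {z u : ℝ} (hz : z ≠ 0) (hu : 0 < u) : exp (z * (-log u / z)) = u⁻¹ := by
  rw [mul_div_cancel₀ _ hz, exp_neg, exp_log hu]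

lemma hasDerivAt_of_eq_neg_log_one_sub_mul_exp_div {γ q : ℝ → ℝ} {g z c t : ℝ} (hz : z ≠ 0)
    (hγ : HasDerivAt γ g t) (hpos : 0 < 1 - z * c * exp (γ t))
    (hq : ∀ s, q s = -log (1 - z * c * exp (γ s)) / z) :
    HasDerivAt q (g * (exp (z * q t) - 1) / z) t := by
  have hu := ((hγ.exp.const_mul (z * c)).const_sub 1).log hpos.ne'
  rw [show q = _ from funext hq]
  refine (hu.neg.div_const z).congr_deriv ?_
  rw [exp_mul_neg_log_div hz hpos]
  field_simp
  ring

lemma hasDerivAt_mul_const_add_integral_inv {w : ℝ → ℝ} {w' c t₀ t : ℝ} (hw : Continuous w)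
    (hw' : HasDerivAt w w' t) (hne : ∀ s ∈ uIcc t₀ t, w s ≠ 0) :
    HasDerivAt (fun s => w s * (c + ∫ τ in t₀..s, (w τ)⁻¹))
      (1 + w' * (c + ∫ τ in t₀..t, (w τ)⁻¹)) t := by
  have hwt : w t ≠ 0 := hne t right_mem_uIcc
  have hint : HasDerivAt (fun s => ∫ τ in t₀..s, (w τ)⁻¹) (w t)⁻¹ t :=
    intervalIntegral.integral_hasDerivAt_right
      ((hw.continuousOn.inv₀ hne).intervalIntegrable)
      (hw.measurable.inv.stronglyMeasurable.stronglyMeasurableAtFilter)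
      (hw.continuousAt.inv₀ hwt)
  refine (hw'.mul (hint.const_add c)).congr_deriv ?_
  rw [mul_inv_cancel₀ hwt]
  ring

theorem deformed_book_system_solution_general (z : ℝ) (hz : z ≠ 0) (c₁ c₂ : ℝ)
    (b γ : ℝ → ℝ) (hγ : ∀ t, HasDerivAt γ (b t) t)
    (I : Set ℝ) (hconv : Convex ℝ I) (t₀ : ℝ) (ht₀ : t₀ ∈ I)
    (hpos : ∀ t ∈ I, 0 < 1 - z * c₁ * Real.exp (γ t))
    (q p : ℝ → ℝ)
    (hq : ∀ t, q t = -Real.log (1 - z * c₁ * Real.exp (γ t)) / z)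
    (hp : ∀ t, p t = (Real.exp (-γ t) - z * c₁) *
        (c₂ + ∫ τ in t₀..t, (Real.exp (-γ τ) - z * c₁)⁻¹)) :
    ∀ t ∈ I,
      HasDerivAt q (b t * (Real.exp (z * q t) - 1) / z) t ∧
      HasDerivAt p (1 - b t * Real.exp (z * q t) * p t) t := by
  intro t ht
  have hw_pos : ∀ s ∈ I, 0 < exp (-γ s) - z * c₁ := fun s hs => by
    rw [exp_neg_sub_eq_exp_neg_mul]
    exact mul_pos (exp_pos _) (hpos s hs)
  have hγcont : Continuous γ := continuous_iff_continuousAt.2 fun s => (hγ s).continuousAt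
  have hw' : HasDerivAt (fun s => exp (-γ s) - z * c₁) (-b t * exp (-γ t)) t := by
    refine (((hγ t).neg.exp).sub_const (z * c₁)).congr_deriv ?_
    rw [Pi.neg_apply]
    ring
  have hexp_q : exp (z * q t) * (exp (-γ t) - z * c₁) = exp (-γ t) := by
    rw [hq, exp_mul_neg_log_div hz (hpos t ht), exp_neg_sub_eq_exp_neg_mul,
      mul_left_comm, inv_mul_cancel₀ (hpos t ht).ne', mul_one]
  constructor
  · exact hasDerivAt_of_eq_neg_log_one_sub_mul_exp_div hz (hγ t) (hpos t ht) hq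
  · have hsub : uIcc t₀ t ⊆ I := hconv.ordConnected.uIcc_subset ht₀ ht
    have hp' := hasDerivAt_mul_const_add_integral_inv (c := c₂) (t₀ := t₀)
      (by fun_prop) hw' fun s hs => (hw_pos s (hsub hs)).ne'
    rw [← funext hp] at hp'
    refine hp'.congr_deriv ?_
    rw [hp, mul_assoc (b t), ← mul_assoc (exp _), hexp_q]
    ring

theorem deformed_book_system_solution (z : ℝ) (hz : z ≠ 0) (c₁ c₂ : ℝ)
    (b γ : ℝ → ℝ) (hb : Continuous b) (hγ : ∀ t, HasDerivAt γ (b t) t)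
    (I : Set ℝ) (hI : IsOpen I) (hconv : Convex ℝ I) (t₀ : ℝ) (ht₀ : t₀ ∈ I)
    (hpos : ∀ t ∈ I, 0 < 1 - z * c₁ * Real.exp (γ t))
    (q p : ℝ → ℝ)
    (hq : ∀ t, q t = -Real.log (1 - z * c₁ * Real.exp (γ t)) / z)
    (hp : ∀ t, p t = (Real.exp (-γ t) - z * c₁) *
        (c₂ + ∫ τ in t₀..t, (Real.exp (-γ τ) - z * c₁)⁻¹)) :
    ∀ t ∈ I,
      HasDerivAt q (b t * (Real.exp (z * q t) - 1) / z) t ∧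
      HasDerivAt p (1 - b t * Real.exp (z * q t) * p t) t :=
  deformed_book_system_solution_general z hz c₁ c₂ b γ hγ I hconv t₀ ht₀ hpos q p hq hp
end

section
/- The Lagrangian L(t,x,v) = t³x⁶/v² satisfies the Euler–Lagrange equation d/dt(∂L/∂v) − ∂L/∂x = 0 along any solution of the Buchdahl equation x'' = (3/x)(x')² + (1/t)x' with x(t) ≠ 0, x'(t) ≠ 0, t > 0; conversely, any twice-differentiable x with x, x' nonvanishing satisfying the Euler–Lagrange equation for L satisfies the Buchdahl equation. -/
/-!
Along the curve, `∂L/∂v = -2 t³x⁶/x'³`, and differentiating in `t` gives the factorisation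
`d/dt(∂L/∂v) - ∂L/∂x = (6 t² x⁵ / x'⁴) · (t x x'' - x x' - 3 t x'²)`.
The prefactor does not vanish, and for `t, x ≠ 0` the bracket is `t x` times
`x'' - (3/x) x'² - x'/t`.
-/

open Filter Topology

lemma hasDerivAt_const_div_sq (c : ℝ) {v : ℝ} (hv : v ≠ 0) :
    HasDerivAt (fun w : ℝ => c / w ^ 2) (-2 * c / v ^ 3) v := by
  refine ((hasDerivAt_const v c).fun_div (hasDerivAt_pow 2 v) (pow_ne_zero 2 hv)).congr_deriv ?_
  field_simp
  ring

lemma hasDerivAt_const_mul_pow_div (c : ℝ) (n : ℕ) (ξ d : ℝ) :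
    HasDerivAt (fun y : ℝ => c * y ^ n / d) (n * c * ξ ^ (n - 1) / d) ξ :=
  (((hasDerivAt_pow n ξ).const_mul c).div_const d).congr_deriv (by ring)

lemma hasDerivAt_buchdahl_momentum {x dx : ℝ → ℝ} {t ddx : ℝ}
    (hx : HasDerivAt x (dx t) t) (hdx : HasDerivAt dx ddx t) (hdx0 : dx t ≠ 0) :
    HasDerivAt (fun s => -2 * (s ^ 3 * x s ^ 6) / dx s ^ 3)
      (-2 * (3 * t ^ 2 * x t ^ 6 + 6 * t ^ 3 * x t ^ 5 * dx t) / dx t ^ 3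
        + 6 * t ^ 3 * x t ^ 6 * ddx / dx t ^ 4) t := by
  have hnum := ((hasDerivAt_pow 3 t).fun_mul (hx.fun_pow 6)).const_mul (-2 : ℝ)
  refine (hnum.fun_div (hdx.fun_pow 3) (pow_ne_zero 3 hdx0)).congr_deriv ?_
  field_simp
  push_cast
  ring

theorem buchdahl_eulerLagrange_eq_mul {x dx : ℝ → ℝ} {t ddx : ℝ}
    (hx : HasDerivAt x (dx t) t) (hdx : HasDerivAt dx ddx t)
    (hdx0 : ∀ᶠ s in 𝓝 t, dx s ≠ 0) :
    deriv (fun s => deriv (fun v => s ^ 3 * x s ^ 6 / v ^ 2) (dx s)) t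
        - deriv (fun ξ => t ^ 3 * ξ ^ 6 / dx t ^ 2) (x t)
      = 6 * t ^ 2 * x t ^ 5 / dx t ^ 4 * (t * x t * ddx - x t * dx t - 3 * t * dx t ^ 2) := by
  have hmomentum : (fun s => deriv (fun v => s ^ 3 * x s ^ 6 / v ^ 2) (dx s))
      =ᶠ[𝓝 t] fun s => -2 * (s ^ 3 * x s ^ 6) / dx s ^ 3 := by
    filter_upwards [hdx0] with s hs
    exact (hasDerivAt_const_div_sq _ hs).deriv
  rw [hmomentum.deriv_eq, (hasDerivAt_buchdahl_momentum hx hdx hdx0.self_of_nhds).deriv,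
    (hasDerivAt_const_mul_pow_div _ _ _ _).deriv]
  field_simp [hdx0.self_of_nhds]
  push_cast
  ring

lemma buchdahl_residual_eq_zero_iff {t x dx ddx : ℝ} (ht : t ≠ 0) (hx : x ≠ 0) :
    t * x * ddx - x * dx - 3 * t * dx ^ 2 = 0 ↔ ddx = 3 / x * dx ^ 2 + dx / t := by
  rw [← mul_right_inj' (mul_ne_zero ht hx)]
  constructor <;> intro h <;> field_simp at * <;> linarith

theorem buchdahl_lagrangian_general (I : Set ℝ) (hI : IsOpen I)
    (hIpos : ∀ t ∈ I, 0 < t)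
    (L : ℝ → ℝ → ℝ → ℝ) (hL : ∀ t x v, L t x v = t ^ 3 * x ^ 6 / v ^ 2)
    (x dx ddx : ℝ → ℝ)
    (hx : ∀ t ∈ I, HasDerivAt x (dx t) t)
    (hdx : ∀ t ∈ I, HasDerivAt dx (ddx t) t)
    (hx0 : ∀ t ∈ I, x t ≠ 0) (hdx0 : ∀ t ∈ I, dx t ≠ 0) :
    (∀ t ∈ I,
        deriv (fun s => deriv (fun v => L s (x s) v) (dx s)) t
          - deriv (fun ξ => L t ξ (dx t)) (x t) = 0)
      ↔ (∀ t ∈ I, ddx t = (3 / x t) * (dx t) ^ 2 + dx t / t) := by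
  obtain rfl : L = fun t x v => t ^ 3 * x ^ 6 / v ^ 2 := by
    funext t x v
    exact hL t x v
  refine forall₂_congr fun t ht => ?_
  have ht0 := (hIpos t ht).ne'
  have hxt := hx0 t ht
  have hdxt := hdx0 t ht
  have hdx0_near : ∀ᶠ s in 𝓝 t, dx s ≠ 0 := eventually_of_mem (hI.mem_nhds ht) hdx0
  rw [buchdahl_eulerLagrange_eq_mul (hx t ht) (hdx t ht) hdx0_near,
    mul_eq_zero_iff_left (by positivity),
    buchdahl_residual_eq_zero_iff ht0 hxt]

theorem buchdahl_lagrangian (I : Set ℝ) (hI : IsOpen I) (hconv : Convex ℝ I)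
    (hIpos : ∀ t ∈ I, 0 < t)
    (L : ℝ → ℝ → ℝ → ℝ) (hL : ∀ t x v, L t x v = t ^ 3 * x ^ 6 / v ^ 2)
    (x dx ddx : ℝ → ℝ)
    (hx : ∀ t ∈ I, HasDerivAt x (dx t) t)
    (hdx : ∀ t ∈ I, HasDerivAt dx (ddx t) t)
    (hx0 : ∀ t ∈ I, x t ≠ 0) (hdx0 : ∀ t ∈ I, dx t ≠ 0) :
    (∀ t ∈ I,
        deriv (fun s => deriv (fun v => L s (x s) v) (dx s)) t
          - deriv (fun ξ => L t ξ (dx t)) (x t) = 0)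
      ↔ (∀ t ∈ I, ddx t = (3 / x t) * (dx t) ^ 2 + dx t / t) :=
  buchdahl_lagrangian_general I hI hIpos L hL x dx ddx hx hdx hx0 hdx0
end
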